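/- arXiv:1905.05034 — 3 statements merged into one kernel-verified Lean document; each statement's English description precedes it below -/
import Mathlib

section
/- Let A ⊆ ℕ be a set of positive integers such that the series ∑_{a∈A} 1/a diverges. Then for every ε > 0 and every integer k ≥ 1, there exists an arithmetic progression P = {a, a+Δ, ..., a+(k-1)Δ} of length k with gap length Δ ≥ 1 such that sup_{p∈P} inf_{a∈A} |p − a| ≤ εΔ. -/
/-!
If no progression of length `k` is `ε`-approximated by `A`, then every long interval of
naturals contains an `A`-free subinterval of a fixed proportion `ρ` of its length (`A` is
porous). Cutting out that gap and recursing, a concavity argument bounds the number of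
elements of `A` in any interval of length `L` by `C * L ^ α` for some `α < 1`. Hence the dyadic
block `[2 ^ j, 2 ^ (j + 1))` contributes at most `C * (2 ^ (α - 1)) ^ j` to `∑ 1 / a`, and
the series converges.
-/

open Finset

theorem rpow_add_rpow_le_two_rpow_mul {x y α : ℝ} (hx : 0 ≤ x) (hy : 0 ≤ y) (hα0 : 0 ≤ α)
    (hα1 : α ≤ 1) : x ^ α + y ^ α ≤ 2 ^ (1 - α) * (x + y) ^ α := by
  have hmid := (Real.concaveOn_rpow hα0 hα1).2 (Set.mem_Ici.2 hx) (Set.mem_Ici.2 hy)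
    (by norm_num : (0 : ℝ) ≤ 1 / 2) (by norm_num : (0 : ℝ) ≤ 1 / 2) (by norm_num)
  have htwo : (2 : ℝ) ^ (1 - α) * (x + y) ^ α = 2 * ((x + y) / 2) ^ α := by
    rw [Real.div_rpow (by linarith) zero_le_two, Real.rpow_sub two_pos, Real.rpow_one]
    field_simp
  simp only [smul_eq_mul] at hmid
  rw [show (1 / 2 : ℝ) * x + 1 / 2 * y = (x + y) / 2 by ring] at hmid
  rw [htwo]
  linarith

theorem le_rpow_mul_rpow_of_le {x y α : ℝ} (hx : 0 ≤ x) (hxy : x ≤ y) (hα : α ≤ 1) :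
    x ≤ y ^ (1 - α) * x ^ α := by
  rcases hx.eq_or_lt with rfl | hx
  · positivity
  calc x = x ^ (1 - α) * x ^ α := by rw [← Real.rpow_add hx, sub_add_cancel, Real.rpow_one]
    _ ≤ y ^ (1 - α) * x ^ α := by gcongr

theorem exists_two_rpow_mul_rpow_eq_one {t : ℝ} (ht0 : 0 < t) (ht1 : t < 1) :
    ∃ α : ℝ, 0 < α ∧ α < 1 ∧ (2 : ℝ) ^ (1 - α) * t ^ α = 1 := by
  have hlog2 := Real.log_pos one_lt_two
  have hlogt := Real.log_neg ht0 ht1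
  have hden : 0 < Real.log 2 - Real.log t := by linarith
  refine ⟨Real.log 2 / (Real.log 2 - Real.log t), div_pos hlog2 hden,
    (div_lt_one hden).2 (by linarith), ?_⟩
  rw [Real.rpow_def_of_pos two_pos, Real.rpow_def_of_pos ht0, ← Real.exp_add,
    Real.exp_eq_one_iff]
  linear_combination -div_mul_cancel₀ (Real.log 2) hden.ne'

theorem summable_of_sum_Ico_two_pow_le {f g : ℕ → ℝ} (hf : ∀ n, 0 ≤ f n) (hg : Summable g)
    (h : ∀ j, ∑ n ∈ Ico (2 ^ j) (2 ^ (j + 1)), f n ≤ g j) : Summable f := by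
  have hg0 : ∀ j, 0 ≤ g j := fun j => (sum_nonneg fun n _ => hf n).trans (h j)
  have hdyadic : ∀ J, ∑ n ∈ range (2 ^ J), f n ≤ f 0 + ∑ j ∈ range J, g j := by
    intro J
    induction J with
    | zero => simp
    | succ J ih =>
      rw [← sum_range_add_sum_Ico f (Nat.pow_le_pow_right two_pos J.le_succ), sum_range_succ]
      linarith [h J]
  refine summable_of_sum_range_le hf (c := f 0 + ∑' j, g j) fun n => ?_
  calc ∑ i ∈ range n, f i ≤ ∑ i ∈ range (2 ^ n), f i :=
        sum_le_sum_of_subset_of_nonneg (range_mono Nat.lt_two_pow_self.le) fun i _ _ => hf i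
    _ ≤ f 0 + ∑ j ∈ range n, g j := hdyadic n
    _ ≤ f 0 + ∑' j, g j := by grw [hg.sum_le_tsum _ fun j _ => hg0 j]

section Porosity

variable {A : Set ℕ}

open Classical in
noncomputable def countIn (A : Set ℕ) (b L : ℕ) : ℕ :=
  #{n ∈ Ico b (b + L) | n ∈ A}

def IsPorous (A : Set ℕ) (ρ : ℝ) (L₀ : ℕ) : Prop :=
  ∀ b L : ℕ, L₀ ≤ L → ∃ c g : ℕ, b ≤ c ∧ c + g ≤ b + L ∧ ρ * L ≤ g ∧
    Disjoint A (Set.Ico c (c + g))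

theorem countIn_le (A : Set ℕ) (b L : ℕ) : countIn A b L ≤ L := by
  classical
  calc countIn A b L ≤ #(Ico b (b + L)) := card_filter_le _ _
    _ = L := by simp

theorem countIn_le_add_of_disjoint {b c g L : ℕ} (hbc : b ≤ c) (hcg : c + g ≤ b + L)
    (hgap : Disjoint A (Set.Ico c (c + g))) :
    countIn A b L ≤ countIn A b (c - b) + countIn A (c + g) (b + L - (c + g)) := by
  classical
  unfold countIn
  rw [Nat.add_sub_cancel' hbc, Nat.add_sub_cancel' hcg]
  refine (card_le_card fun n hn => ?_).trans (card_union_le _ _)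
  simp only [mem_filter, mem_Ico, mem_union] at hn ⊢
  obtain ⟨hn, hnA⟩ := hn
  have hn_gap := Set.disjoint_left.1 hgap hnA
  rw [Set.mem_Ico] at hn_gap
  rcases lt_or_ge n c with hnc | hnc
  · exact .inl ⟨by omega, hnA⟩
  · exact .inr ⟨by omega, hnA⟩

/-- Cutting out the gap leaves two intervals of total length at most `(1 - ρ) * L`; by
concavity their bounds add up to at most `2 ^ (1 - α) * (1 - ρ) ^ α ≤ 1` times the bound for
`L`. -/
theorem IsPorous.countIn_le_rpow {ρ α : ℝ} {L₀ : ℕ} (h : IsPorous A ρ L₀) (hρ0 : 0 < ρ)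
    (hρ1 : ρ ≤ 1) (hα0 : 0 ≤ α) (hα1 : α ≤ 1) (hαρ : 2 ^ (1 - α) * (1 - ρ) ^ α ≤ 1)
    (b L : ℕ) : (countIn A b L : ℝ) ≤ (L₀ : ℝ) ^ (1 - α) * (L : ℝ) ^ α := by
  induction L using Nat.strong_induction_on generalizing b with
  | _ L ih =>
  set C : ℝ := (L₀ : ℝ) ^ (1 - α)
  rcases le_or_gt L L₀ with hL | hL
  · exact (Nat.cast_le.2 (countIn_le A b L)).trans
      (le_rpow_mul_rpow_of_le (Nat.cast_nonneg _) (Nat.cast_le.2 hL) hα1)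
  obtain ⟨c, g, hbc, hcg, hg, hgap⟩ := h b L hL.le
  have hg0 : 0 < g := by
    have : (0 : ℝ) < ρ * L := mul_pos hρ0 (by exact_mod_cast hL.trans_le' (Nat.zero_le _))
    exact_mod_cast this.trans_le hg
  set L₁ := c - b
  set L₂ := b + L - (c + g)
  have hlen : (L₁ : ℝ) + L₂ ≤ (1 - ρ) * L := by
    have : L₁ + L₂ + g = L := by omega
    rw [← this] at hg ⊢
    push_cast at hg ⊢
    nlinarith
  calc (countIn A b L : ℝ) ≤ countIn A b L₁ + countIn A (c + g) L₂ := by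
        exact_mod_cast countIn_le_add_of_disjoint hbc hcg hgap
    _ ≤ C * (L₁ : ℝ) ^ α + C * (L₂ : ℝ) ^ α :=
        add_le_add (ih L₁ (by omega) b) (ih L₂ (by omega) (c + g))
    _ ≤ C * (2 ^ (1 - α) * ((L₁ : ℝ) + L₂) ^ α) := by
        rw [← mul_add]
        gcongr
        exact rpow_add_rpow_le_two_rpow_mul (by positivity) (by positivity) hα0 hα1
    _ ≤ C * (2 ^ (1 - α) * ((1 - ρ) * L) ^ α) := by gcongr
    _ = C * L ^ α * (2 ^ (1 - α) * (1 - ρ) ^ α) := by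
        rw [Real.mul_rpow (by linarith) (Nat.cast_nonneg _)]
        ring
    _ ≤ C * L ^ α := mul_le_of_le_one_right (by positivity) hαρ

theorem sum_Ico_indicator_one_div_le (j : ℕ) :
    ∑ n ∈ Ico (2 ^ j) (2 ^ (j + 1)), A.indicator (fun n : ℕ => 1 / (n : ℝ)) n ≤
      countIn A (2 ^ j) (2 ^ j) / 2 ^ j := by
  classical
  simp only [Set.indicator_apply, ← sum_filter, countIn, pow_succ, mul_two]
  calc ∑ n ∈ Ico (2 ^ j) (2 ^ j + 2 ^ j) with n ∈ A, 1 / (n : ℝ)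
      ≤ #{n ∈ Ico (2 ^ j) (2 ^ j + 2 ^ j) | n ∈ A} • (1 / (2 : ℝ) ^ j) := by
        refine sum_le_card_nsmul _ _ _ fun n hn => one_div_le_one_div_of_le (by positivity) ?_
        exact_mod_cast (mem_Ico.1 (mem_filter.1 hn).1).1
    _ = _ := by rw [nsmul_eq_mul, mul_one_div]

theorem summable_one_div_of_countIn_le_rpow {C α : ℝ} (hα : α < 1)
    (h : ∀ b L, (countIn A b L : ℝ) ≤ C * (L : ℝ) ^ α) :
    Summable (fun a : A => 1 / (a : ℝ)) := by
  have hr0 : 0 ≤ (2 : ℝ) ^ (α - 1) := by positivity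
  have hr1 : (2 : ℝ) ^ (α - 1) < 1 := Real.rpow_lt_one_of_one_lt_of_neg one_lt_two (by linarith)
  refine (summable_subtype_iff_indicator (f := fun n : ℕ => 1 / (n : ℝ))).2
    (summable_of_sum_Ico_two_pow_le (fun n => Set.indicator_nonneg (fun n _ => by positivity) n)
      ((summable_geometric_of_lt_one hr0 hr1).mul_left C) fun j => ?_)
  calc _ ≤ countIn A (2 ^ j) (2 ^ j) / (2 : ℝ) ^ j := sum_Ico_indicator_one_div_le j
    _ ≤ C * ((2 : ℝ) ^ j) ^ α / 2 ^ j := by gcongr; exact_mod_cast h _ _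
    _ = C * ((2 : ℝ) ^ (α - 1)) ^ j := by
        rw [Real.rpow_sub_one two_ne_zero, div_pow, ← Real.rpow_pow_comm zero_le_two, mul_div]

theorem IsPorous.summable_one_div {ρ : ℝ} {L₀ : ℕ} (h : IsPorous A ρ L₀)
    (hρ0 : 0 < ρ) (hρ1 : ρ < 1) : Summable (fun a : A => 1 / (a : ℝ)) := by
  obtain ⟨α, hα0, hα1, hαρ⟩ := exists_two_rpow_mul_rpow_eq_one (sub_pos.2 hρ1) (by linarith)
  exact summable_one_div_of_countIn_le_rpow hα1
    (h.countIn_le_rpow hρ0 hρ1.le hα0.le hα1.le hαρ.le)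

end Porosity

section FarProgressions

variable {A : Set ℕ} {ε : ℝ} {k N : ℕ}

theorem exists_disjoint_Ico_of_forall_far (hN : 2 ≤ N) (hεN : 1 ≤ ε * N)
    (hfar : ∀ a Δ : ℝ, 1 ≤ Δ → ∃ i < k, ∀ x ∈ A, ε * Δ < |a + i * Δ - x|) (b m : ℕ)
    (hm : 1 ≤ m) : ∃ i < k, Disjoint A (Set.Ico (b + i * N * m) (b + i * N * m + 2 * m)) := by
  have hΔ : (1 : ℝ) ≤ N * m := by exact_mod_cast Nat.one_le_iff_ne_zero.2 (by positivity)
  -- The window `[b + i N m, b + i N m + 2 m)` lies within `m ≤ ε Δ` of the `i`-th point.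
  obtain ⟨i, hik, hi⟩ := hfar (b + m) (N * m) hΔ
  refine ⟨i, hik, Set.disjoint_left.2 fun x hxA hx => ?_⟩
  rw [Set.mem_Ico] at hx
  have hx₁ : (b : ℝ) + i * N * m ≤ x := by exact_mod_cast hx.1
  have hx₂ : (x : ℝ) < b + i * N * m + 2 * m := by exact_mod_cast hx.2
  have hclose : |(b + m : ℝ) + i * (N * m) - x| ≤ m := abs_le.2 ⟨by linarith, by linarith⟩
  have hradius : (m : ℝ) ≤ ε * (N * m) := by nlinarith
  linarith [hi x hxA]

theorem isPorous_of_forall_far (hk : 1 ≤ k) (hN : 2 ≤ N) (hεN : 1 ≤ ε * N)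
    (hfar : ∀ a Δ : ℝ, 1 ≤ Δ → ∃ i < k, ∀ x ∈ A, ε * Δ < |a + i * Δ - x|) :
    IsPorous A (1 / (k * N)) (k * N) := by
  intro b L hL
  have hkN : 0 < k * N := Nat.mul_pos (by omega) (by omega)
  set m := L / (k * N)
  have hm : 1 ≤ m := (Nat.le_div_iff_mul_le hkN).2 (by omega)
  have hmL : m * (k * N) ≤ L := Nat.div_mul_le_self L (k * N)
  have hLm : L < m * (k * N) + k * N := Nat.lt_div_mul_add hkN
  obtain ⟨i, hik, hgap⟩ := exists_disjoint_Ico_of_forall_far hN hεN hfar b m hm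
  refine ⟨b + i * N * m, 2 * m, by omega, ?_, ?_, hgap⟩
  · have h₁ : 2 * m ≤ N * m := Nat.mul_le_mul_right m hN
    have h₂ : (i + 1) * (N * m) ≤ k * (N * m) := Nat.mul_le_mul_right _ hik
    nlinarith
  · rw [div_mul_eq_mul_div, one_mul, div_le_iff₀ (by positivity)]
    have : L ≤ 2 * m * (k * N) := by nlinarith
    exact_mod_cast this

theorem exists_isPorous_of_forall_far (hε : 0 < ε) (hk : 1 ≤ k)
    (hfar : ∀ a Δ : ℝ, 1 ≤ Δ → ∃ i < k, ∀ x ∈ A, ε * Δ < |a + i * Δ - x|) :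
    ∃ ρ : ℝ, ∃ L₀ : ℕ, 0 < ρ ∧ ρ < 1 ∧ IsPorous A ρ L₀ := by
  obtain ⟨n, hn⟩ := exists_nat_one_div_lt hε
  rw [div_lt_iff₀ (by positivity)] at hn
  have hεN : 1 ≤ ε * (n + 2 : ℕ) := by push_cast; nlinarith
  have hkN : (1 : ℝ) < k * (n + 2 : ℕ) := by
    have : (1 : ℝ) ≤ k := by exact_mod_cast hk
    push_cast
    nlinarith
  exact ⟨_, _, by positivity, (div_lt_one (by linarith)).2 hkN,
    isPorous_of_forall_far hk (by omega) hεN hfar⟩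

end FarProgressions

theorem erdos_weak_approx_general (A : Set ℕ)
    (hdiv : ¬ Summable (fun a : A => (1 : ℝ) / a)) :
    ∀ ε : ℝ, 0 < ε → ∀ k : ℕ, 1 ≤ k →
      ∃ a Δ : ℝ, 1 ≤ Δ ∧
        ∀ i : ℕ, i < k → ∃ x ∈ A, |a + i * Δ - (x : ℝ)| ≤ ε * Δ := by
  intro ε hε k hk
  by_contra! hfar
  obtain ⟨ρ, L₀, hρ0, hρ1, hporous⟩ := exists_isPorous_of_forall_far hε hk hfar
  exact hdiv (hporous.summable_one_div hρ0 hρ1)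

/-- Theorem 2.1 of Fraser–Yu: if the reciprocals of `A` form a divergent series, then for
every `ε > 0` and `k ≥ 1` there is an arithmetic progression of length `k` and gap length
`Δ ≥ 1` which is approximated by `A` to within `ε * Δ`. -/
theorem erdos_weak_approx (A : Set ℕ) (hA : ∀ a ∈ A, 0 < a)
    (hdiv : ¬ Summable (fun a : A => (1 : ℝ) / a)) :
    ∀ ε : ℝ, 0 < ε → ∀ k : ℕ, 1 ≤ k →
      ∃ a Δ : ℝ, 1 ≤ Δ ∧
        ∀ i : ℕ, i < k → ∃ x ∈ A, |a + i * Δ - (x : ℝ)| ≤ ε * Δ :=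
  erdos_weak_approx_general A hdiv
end

section
/- Let A ⊆ ℕ be a set of positive integers such that the series ∑_{a∈A} 1/a diverges. Then for every γ > 1, the inequality #(A ∩ [0,n]) ≥ n/(log n)^γ holds for infinitely many n ∈ ℕ. -/
open Real Set

/-- Summability of `∑ 1/((n+1) (log (n+1))^γ)` for `γ > 1`, via Cauchy condensation. -/
lemma aux_summable_one_div_mul_log_rpow {γ : ℝ} (hγ : 1 < γ) :
    Summable (fun n : ℕ => 1 / (((n : ℝ) + 1) * (Real.log ((n : ℝ) + 1)) ^ γ)) := by
  set f : ℕ → ℝ := fun n => 1 / (((n : ℝ) + 1) * (Real.log ((n : ℝ) + 1)) ^ γ) with hf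
  have hγ0 : (0 : ℝ) ≤ γ := by linarith
  have h_nonneg : ∀ n, 0 ≤ f n := by
    intro n
    apply one_div_nonneg.mpr
    have h0 : (0:ℝ) ≤ Real.log ((n:ℝ)+1) := Real.log_nonneg (by linarith [Nat.cast_nonneg (α := ℝ) n])
    exact mul_nonneg (by positivity) (Real.rpow_nonneg h0 γ)
  have h_mono : ∀ ⦃m n : ℕ⦄, 0 < m → m ≤ n → f n ≤ f m := by
    intro m n hm hmn
    have hm1 : (1:ℝ) ≤ (m:ℝ) := by exact_mod_cast hm
    have hmn' : (m:ℝ) + 1 ≤ (n:ℝ) + 1 := by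
      have : (m:ℝ) ≤ n := by exact_mod_cast hmn
      linarith
    have hlogm : 0 < Real.log ((m:ℝ)+1) := Real.log_pos (by linarith)
    have hlog : Real.log ((m:ℝ)+1) ≤ Real.log ((n:ℝ)+1) :=
      Real.log_le_log (by linarith) hmn'
    have hr : (Real.log ((m:ℝ)+1)) ^ γ ≤ (Real.log ((n:ℝ)+1)) ^ γ :=
      Real.rpow_le_rpow hlogm.le hlog hγ0
    have hrp : 0 < (Real.log ((m:ℝ)+1)) ^ γ := Real.rpow_pos_of_pos hlogm γ
    apply one_div_le_one_div_of_le
    · positivity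
    · apply mul_le_mul hmn' hr hrp.le (by positivity)
  rw [← summable_condensed_iff_of_nonneg h_nonneg h_mono]
  rw [← summable_nat_add_iff 1]
  have hlog2 : (0:ℝ) < Real.log 2 := Real.log_pos (by norm_num)
  have hc : (0:ℝ) < (Real.log 2) ^ γ := Real.rpow_pos_of_pos hlog2 γ
  have hmaj : Summable (fun k : ℕ => ((Real.log 2) ^ γ)⁻¹ * (1 / ((k:ℝ)+1) ^ γ)) := by
    apply Summable.mul_left
    have := (Real.summable_one_div_nat_rpow (p := γ)).mpr hγ
    have h2 := (summable_nat_add_iff 1).mpr this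
    exact h2.congr fun k => by push_cast; ring_nf
  apply Summable.of_nonneg_of_le _ _ hmaj
  · intro k
    exact mul_nonneg (by positivity) (h_nonneg _)
  · intro k
    have h2p : (0:ℝ) < (2:ℝ)^(k+1) := by positivity
    have hk1 : (0:ℝ) < (k:ℝ)+1 := by positivity
    -- log (2^(k+1)+1) ≥ (k+1) * log 2
    have hlogge : ((k:ℝ)+1) * Real.log 2 ≤ Real.log (((2:ℕ)^(k+1) : ℕ) + 1) := by
      have h1 : ((k:ℝ)+1) * Real.log 2 = Real.log ((2:ℝ)^(k+1)) := by
        rw [Real.log_pow]; push_cast; ring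
      rw [h1]
      apply Real.log_le_log h2p
      push_cast; linarith
    have hklog : (0:ℝ) < ((k:ℝ)+1) * Real.log 2 := by positivity
    have hlogpos : (0:ℝ) < Real.log (((2:ℕ)^(k+1) : ℕ) + 1) := lt_of_lt_of_le hklog hlogge
    have hrle : (((k:ℝ)+1) * Real.log 2) ^ γ ≤ (Real.log (((2:ℕ)^(k+1) : ℕ) + 1)) ^ γ :=
      Real.rpow_le_rpow hklog.le hlogge hγ0
    have hmulr : (((k:ℝ)+1) * Real.log 2) ^ γ = ((k:ℝ)+1) ^ γ * (Real.log 2) ^ γ :=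
      Real.mul_rpow hk1.le hlog2.le
    have hcastn : (((2:ℕ)^(k+1) : ℕ) : ℝ) = (2:ℝ)^(k+1) := by push_cast; ring
    have hden1 : (0:ℝ) < (((2:ℕ)^(k+1):ℕ):ℝ) + 1 := by rw [hcastn]; positivity
    have hrp : (0:ℝ) < (Real.log (((2:ℕ)^(k+1) : ℕ) + 1)) ^ γ :=
      Real.rpow_pos_of_pos hlogpos γ
    have hkp : (0:ℝ) < ((k:ℝ)+1)^γ := Real.rpow_pos_of_pos hk1 γ
    have hA1 : (2:ℝ)^(k+1) * (((k:ℝ)+1)^γ * (Real.log 2)^γ) ≤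
        ((((2:ℕ)^(k+1):ℕ):ℝ) + 1) * (Real.log ((((2:ℕ)^(k+1):ℕ):ℝ) + 1)) ^ γ := by
      rw [← hmulr]
      apply mul_le_mul (by rw [hcastn] at hden1 ⊢; linarith) (by exact_mod_cast hrle)
        (by positivity) (by positivity)
    have hfle : f (2^(k+1)) ≤ 1 / ((2:ℝ)^(k+1) * (((k:ℝ)+1)^γ * (Real.log 2)^γ)) := by
      rw [hf]
      simp only []
      apply one_div_le_one_div_of_le (by positivity)
      exact_mod_cast hA1
    calc (2:ℝ)^(k+1) * f (2^(k+1))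
        ≤ (2:ℝ)^(k+1) * (1 / ((2:ℝ)^(k+1) * (((k:ℝ)+1)^γ * (Real.log 2)^γ))) :=
          mul_le_mul_of_nonneg_left hfle (by positivity)
      _ = ((Real.log 2) ^ γ)⁻¹ * (1 / ((k:ℝ)+1) ^ γ) := by
          field_simp


/-- If the reciprocals of a set `A` of positive integers form a divergent series, then for
every `γ > 1` we have `#(A ∩ [0,n]) ≥ n / (log n)^γ` for infinitely many `n`. -/
theorem divergent_implies_powerlog_density (A : Set ℕ) (hA : ∀ a ∈ A, 0 < a)
    (hdiv : ¬ Summable (fun a : A => (1 : ℝ) / a)) :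
    ∀ γ : ℝ, 1 < γ →
      {n : ℕ | (n : ℝ) / (Real.log n) ^ γ ≤
        (Nat.card (A ∩ Set.Icc 0 n : Set ℕ) : ℝ)}.Infinite := by
  intro γ hγ
  by_contra hfin
  rw [Set.not_infinite] at hfin
  obtain ⟨N, hN⟩ := hfin.bddAbove
  have hbig : ∀ n : ℕ, N < n →
      (Nat.card (A ∩ Set.Icc 0 n : Set ℕ) : ℝ) < (n : ℝ) / (Real.log n) ^ γ := by
    intro n hn
    by_contra h
    push_neg at h
    exact absurd (hN h) (not_le.mpr hn)
  -- A must be infinite (else the sum is trivially summable)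
  rcases Set.finite_or_infinite A with hAfin | hAinf
  · haveI := hAfin.to_subtype
    exact hdiv (Summable.of_finite)
  apply hdiv
  have hinf : {n | n ∈ A}.Infinite := hAinf
  set nth : ℕ → ℕ := Nat.nth (· ∈ A) with hnth
  have hmem : ∀ j, nth j ∈ A := fun j => Nat.nth_mem_of_infinite hinf j
  have hsm : StrictMono nth := Nat.nth_strictMono hinf
  -- `nth j ≥ j + 1`
  have hge : ∀ j, j + 1 ≤ nth j := by
    intro j
    induction j with
    | zero => exact hA _ (hmem 0)
    | succ k ih => exact Nat.succ_le_of_lt (lt_of_le_of_lt ih (hsm (Nat.lt_succ_self k)))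
  -- counting: j + 1 ≤ #(A ∩ [0, nth j])
  have hcount : ∀ j : ℕ, j + 1 ≤ Nat.card (A ∩ Set.Icc 0 (nth j) : Set ℕ) := by
    intro j
    haveI : Finite (A ∩ Set.Icc 0 (nth j) : Set ℕ) :=
      ((Set.finite_Icc 0 (nth j)).inter_of_right A).to_subtype
    have hginj : Function.Injective
        (fun i : Fin (j+1) => (⟨nth i, hmem i, by
          simp only [Set.mem_Icc]
          exact ⟨Nat.zero_le _, hsm.monotone (Nat.lt_succ_iff.mp i.isLt)⟩⟩ :
            (A ∩ Set.Icc 0 (nth j) : Set ℕ))) := by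
      intro a b hab
      have := hsm.injective (Subtype.mk_eq_mk.mp hab)
      exact Fin.ext this
    have h := Nat.card_le_card_of_injective _ hginj
    simpa only [Nat.card_eq_fintype_card, Fintype.card_fin] using h
  -- summability of the subtype sum
  have : Summable (fun n : ℕ => A.indicator (fun m : ℕ => (1:ℝ) / m) n) := by
    have hrange : Set.range nth = A := Nat.range_nth_of_infinite hinf
    rw [← Function.Injective.summable_iff hsm.injective (by
      intro x hx
      have : x ∉ A := by rwa [← hrange]
      exact Set.indicator_of_notMem this _)]
    have heq : (fun j => A.indicator (fun m : ℕ => (1:ℝ) / m) (nth j)) =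
        fun j => (1:ℝ) / (nth j) := by
      funext j
      exact Set.indicator_of_mem (hmem j) _
    show Summable ((A.indicator (fun m : ℕ => (1:ℝ)/m)) ∘ nth)
    rw [show (A.indicator (fun m : ℕ => (1:ℝ)/m)) ∘ nth =
      fun j => A.indicator (fun m : ℕ => (1:ℝ)/m) (nth j) from rfl, heq]
    -- main comparison, after discarding the first N + 2 terms
    rw [← summable_nat_add_iff (N + 2)]
    have hmaj := aux_summable_one_div_mul_log_rpow hγ
    have hmaj' := (summable_nat_add_iff (N + 2)).mpr hmaj
    apply Summable.of_nonneg_of_le _ _ hmaj'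
    · intro j; positivity
    · intro j
      set m : ℕ := j + (N + 2) with hm
      have hnN : N < nth m := lt_of_lt_of_le (by omega) (hge m)
      have h3 : 3 ≤ nth m := le_trans (by omega) (hge m)
      have hlt := hbig (nth m) hnN
      have hcard := hcount m
      have hlogpos : 0 < Real.log (nth m) := by
        apply Real.log_pos
        exact_mod_cast lt_of_lt_of_le (by norm_num) h3
      have hLp : 0 < (Real.log (nth m)) ^ γ := Real.rpow_pos_of_pos hlogpos γ
      have hj1 : ((m:ℝ) + 1) < (nth m : ℝ) / (Real.log (nth m)) ^ γ := by
        calc ((m:ℝ) + 1) ≤ (Nat.card (A ∩ Set.Icc 0 (nth m) : Set ℕ) : ℝ) := by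
              exact_mod_cast hcard
          _ < _ := hlt
      have hmain : ((m:ℝ) + 1) * (Real.log (nth m)) ^ γ < (nth m : ℝ) :=
        (lt_div_iff₀ hLp).mp hj1
      have hmlog : 0 < Real.log ((m:ℝ) + 1) := by
        apply Real.log_pos
        have : (2:ℕ) ≤ m := by omega
        have : (2:ℝ) ≤ (m:ℝ) := by exact_mod_cast this
        linarith
      have hmle : (m:ℝ) + 1 ≤ (nth m : ℝ) := by
        have := hge m
        exact_mod_cast this
      have hlogle : (Real.log ((m:ℝ) + 1)) ^ γ ≤ (Real.log (nth m)) ^ γ := by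
        apply Real.rpow_le_rpow hmlog.le (Real.log_le_log (by positivity) hmle) (by linarith)
      have hdenpos : 0 < ((m:ℝ) + 1) * (Real.log ((m:ℝ) + 1)) ^ γ := by
        have := Real.rpow_pos_of_pos hmlog γ
        positivity
      have hchain : ((m:ℝ) + 1) * (Real.log ((m:ℝ) + 1)) ^ γ ≤ (nth m : ℝ) := by
        calc ((m:ℝ) + 1) * (Real.log ((m:ℝ) + 1)) ^ γ
            ≤ ((m:ℝ) + 1) * (Real.log (nth m)) ^ γ := by
              apply mul_le_mul_of_nonneg_left hlogle (by positivity)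
          _ ≤ (nth m : ℝ) := hmain.le
      have final : (1:ℝ) / (nth m) ≤ 1 / (((m:ℝ) + 1) * (Real.log ((m:ℝ) + 1)) ^ γ) :=
        one_div_le_one_div_of_le hdenpos hchain
      exact final
  rw [← summable_subtype_iff_indicator] at this
  exact this
end

section
/- Let A ⊆ ℕ and let C ∈ ℕ. Suppose that for every integer K ≥ 1 there exists an arithmetic progression P of length K (with gap length Δ ≥ 1, consisting of integers) such that sup_{p∈P} inf_{a∈A} |p − a| ≤ C. Then for every integer k ≥ 1, the set A contains an arithmetic progression of length k. (This follows by colouring the points of A that approximate a sufficiently long progression P according to their signed distance from P, using at most 2C+1 colours, and applying Van der Waerden's theorem to extract a monochromatic—hence genuine—arithmetic progression of length k in A.) -/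
/-- If `A ⊆ ℕ` approximates arbitrarily long integer arithmetic progressions to within a
uniform constant `C`, then (by Van der Waerden's theorem, colouring approximating points by
their signed distance to the progression, using at most `2C+1` colours) `A` contains genuine
arithmetic progressions of every length. -/
theorem contains_AP_of_uniform_approx (A : Set ℕ) (C : ℕ)
    (h : ∀ K : ℕ, 1 ≤ K → ∃ a Δ : ℕ, 1 ≤ Δ ∧
      ∀ i : ℕ, i < K → ∃ x ∈ A, |((a : ℤ) + i * Δ) - (x : ℤ)| ≤ (C : ℤ)) :
    ∀ k : ℕ, 1 ≤ k → ∃ a Δ : ℕ, 1 ≤ Δ ∧ ∀ i : ℕ, i < k → a + i * Δ ∈ A := by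
  classical
  intro k hk
  -- choose the approximating progressions uniformly
  have h' : ∀ K : ℕ, ∃ a Δ : ℕ, 1 ≤ Δ ∧ ∀ i : ℕ, i ≤ K →
      ∃ x ∈ A, |((a : ℤ) + i * Δ) - (x : ℤ)| ≤ (C : ℤ) := by
    intro K
    obtain ⟨a, Δ, hΔ, hp⟩ := h (K + 1) (by omega)
    exact ⟨a, Δ, hΔ, fun i hi => hp i (by omega)⟩
  choose aK ΔK hΔK hx using h'
  set m := 2 * C + 1 with hm
  -- chosen approximating points
  let xv : ℕ → ℕ → ℕ := fun K i =>
    if hp : ∃ x ∈ A, |((aK K : ℤ) + i * ΔK K) - (x : ℤ)| ≤ (C : ℤ) then hp.choose else 0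
  have hxv : ∀ K i, i ≤ K → xv K i ∈ A ∧
      |((aK K : ℤ) + i * ΔK K) - (xv K i : ℤ)| ≤ (C : ℤ) := by
    intro K i hi
    have hp := hx K i hi
    simp only [xv, dif_pos hp]
    exact ⟨hp.choose_spec.1, hp.choose_spec.2⟩
  -- colourings
  let col : ℕ → ℕ → Fin m := fun K i =>
    ⟨((((aK K : ℤ) + i * ΔK K) - (xv K i : ℤ)) + C).toNat % m,
      Nat.mod_lt _ (by omega)⟩
  -- limit colouring along an ultrafilter
  let U : Ultrafilter ℕ := Filter.hyperfilter ℕ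
  have hc : ∀ i : ℕ, ∃ d : Fin m, {K | col K i = d} ∈ U := by
    intro i
    obtain ⟨d, -, hd⟩ := Ultrafilter.eq_pure_of_finite_mem
      (f := U.map fun K => col K i) (Set.finite_univ (α := Fin m)) Filter.univ_mem
    refine ⟨d, ?_⟩
    have : {d} ∈ (U.map fun K => col K i) := by
      rw [hd]; exact Filter.mem_pure.mpr rfl
    simpa [Filter.mem_map, Set.preimage] using this
  choose c hcU using hc
  -- Van der Waerden
  obtain ⟨Δ', hΔ'pos, b, d, hmono⟩ :=
    Combinatorics.exists_mono_homothetic_copy (Finset.range k) c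
  -- find a K in the intersection of the relevant ultrafilter sets
  have h1 : ∀ᶠ K in (U : Filter ℕ), ∀ j ∈ Finset.range k,
      col K (Δ' * j + b) = c (Δ' * j + b) := by
    rw [Filter.eventually_all_finset]
    intro j _
    exact hcU (Δ' * j + b)
  have h2 : ∀ᶠ K in (U : Filter ℕ), Δ' * k + b ≤ K :=
    Nat.hyperfilter_le_atTop (Filter.eventually_ge_atTop (Δ' * k + b))
  obtain ⟨K, hK1, hK2⟩ := (h1.and h2).exists
  -- positions of the monochromatic AP
  have hle : ∀ j, j < k → Δ' * j + b ≤ K := by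
    intro j hj
    have : Δ' * j ≤ Δ' * k := Nat.mul_le_mul_left _ hj.le
    omega
  -- the common signed distance
  have key : ∀ j, j < k →
      ((aK K : ℤ) + ((Δ' * j + b : ℕ) : ℤ) * ΔK K) - (xv K (Δ' * j + b) : ℤ) =
      ((aK K : ℤ) + ((Δ' * 0 + b : ℕ) : ℤ) * ΔK K) - (xv K (Δ' * 0 + b) : ℤ) := by
    intro j hj
    have hcolj : col K (Δ' * j + b) = d := by
      rw [hK1 j (Finset.mem_range.mpr hj)]
      simpa [smul_eq_mul] using hmono j (Finset.mem_range.mpr hj)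
    have hcol0 : col K (Δ' * 0 + b) = d := by
      rw [hK1 0 (Finset.mem_range.mpr (by omega))]
      simpa [smul_eq_mul] using hmono 0 (Finset.mem_range.mpr (by omega))
    have habsj := (hxv K (Δ' * j + b) (hle j hj)).2
    have habs0 := (hxv K (Δ' * 0 + b) (hle 0 (by omega))).2
    rw [abs_le] at habsj habs0
    have hvals : ((((aK K : ℤ) + ((Δ' * j + b : ℕ) : ℤ) * ΔK K) - (xv K (Δ' * j + b) : ℤ) + C).toNat % m)
        = ((((aK K : ℤ) + ((Δ' * 0 + b : ℕ) : ℤ) * ΔK K) - (xv K (Δ' * 0 + b) : ℤ) + C).toNat % m) :=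
      congrArg Fin.val (hcolj.trans hcol0.symm)
    rw [Nat.mod_eq_of_lt (by omega), Nat.mod_eq_of_lt (by omega)] at hvals
    omega
  refine ⟨xv K (Δ' * 0 + b), Δ' * ΔK K,
    Nat.mul_pos hΔ'pos (hΔK K), ?_⟩
  intro j hj
  have hjj := key j hj
  have hcast : ((Δ' * j + b : ℕ) : ℤ) * ΔK K
      = ((Δ' * 0 + b : ℕ) : ℤ) * ΔK K + (j : ℤ) * ((Δ' : ℤ) * ΔK K) := by
    push_cast; ring
  have heq : ((xv K (Δ' * 0 + b) + j * (Δ' * ΔK K) : ℕ) : ℤ) = (xv K (Δ' * j + b) : ℤ) := by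
    push_cast
    push_cast at hjj hcast
    linarith
  have : xv K (Δ' * 0 + b) + j * (Δ' * ΔK K) = xv K (Δ' * j + b) := by exact_mod_cast heq
  rw [this]
  exact (hxv K (Δ' * j + b) (hle j hj)).1
end
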